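/- arXiv:1007.0114 — 2 statements merged into one kernel-verified Lean document; each statement's English description precedes it below -/
import Mathlib

section
/- Let f : G → ℝⁿ be a continuous vector field with f(0) = 0 on a neighborhood G of the origin. Suppose there is a sequence of compact sets Kᵢ ⊆ G containing 0 in their interiors, nested (Kᵢ ⊇ Kⱼ for i < j) with ⋂ᵢ Kᵢ = {0}, whose boundaries Hᵢ are smooth hypersurfaces on which the vector field points strictly inward (⟨N(x), f(x)⟩ > 0 for the inward unit normal N). Then the equilibrium 0 of x' = f(x) is Lyapunov stable: for every ε > 0 there is δ > 0 such that every solution starting within distance δ of 0 stays within distance ε of 0 for all forward time. -/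
open Metric Set Filter Topology

/-- Lyapunov stability of the equilibrium `0` of `x' = f x`: for every `ε > 0` there is `δ > 0`
such that every forward solution starting within distance `δ` of `0` stays within `ε` of `0`. -/
def LyapunovStable {n : ℕ} (f : EuclideanSpace ℝ (Fin n) → EuclideanSpace ℝ (Fin n)) : Prop :=
  ∀ ε > (0 : ℝ), ∃ δ > (0 : ℝ), ∀ x : ℝ → EuclideanSpace ℝ (Fin n),
    (∀ t ≥ (0 : ℝ), HasDerivAt x (f (x t)) t) → ‖x 0‖ < δ → ∀ t ≥ (0 : ℝ), ‖x t‖ < ε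

lemma shrink_aux {n : ℕ} (K : ℕ → Set (EuclideanSpace ℝ (Fin n))) (hKc : ∀ i, IsCompact (K i))
    (hnest : ∀ i j, i ≤ j → K j ⊆ K i)
    (hinter : ⋂ i, K i = {(0 : EuclideanSpace ℝ (Fin n))}) {ε : ℝ} (hε : 0 < ε) :
    ∃ i, K i ⊆ ball 0 ε := by
  by_contra h
  push_neg at h
  have hne : ∀ i, (K i ∩ (ball (0:EuclideanSpace ℝ (Fin n)) ε)ᶜ).Nonempty := by
    intro i
    obtain ⟨x, hx, hx'⟩ := not_subset.mp (h i)
    exact ⟨x, hx, hx'⟩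
  have hnonempty := IsCompact.nonempty_iInter_of_directed_nonempty_isCompact_isClosed
    (fun i => K i ∩ (ball (0:EuclideanSpace ℝ (Fin n)) ε)ᶜ)
    (fun i j => ⟨max i j, inter_subset_inter_left _ (hnest i _ (le_max_left i j)),
      inter_subset_inter_left _ (hnest j _ (le_max_right i j))⟩)
    hne (fun i => (hKc i).inter_right isOpen_ball.isClosed_compl)
    (fun i => ((hKc i).isClosed).inter isOpen_ball.isClosed_compl)
  obtain ⟨x, hx⟩ := hnonempty
  rw [← iInter_inter, hinter] at hx
  obtain ⟨hx1, hx2⟩ := hx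
  rw [mem_singleton_iff] at hx1
  subst hx1
  exact hx2 (mem_ball_self hε)

lemma invariance_aux {n : ℕ}
    (f : EuclideanSpace ℝ (Fin n) → EuclideanSpace ℝ (Fin n))
    (C : Set (EuclideanSpace ℝ (Fin n))) (hCc : IsClosed C)
    (g : EuclideanSpace ℝ (Fin n) → ℝ) (hg : ContDiff ℝ (⊤ : ℕ∞) g)
    (hKg : C = {x | g x ≤ 0})
    (hfrg : frontier C = {x | g x = 0})
    (hin : ∀ x ∈ frontier C, inner ℝ (gradient g x) (f x) < (0 : ℝ))
    (x : ℝ → EuclideanSpace ℝ (Fin n))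
    (hx : ∀ t ≥ (0 : ℝ), HasDerivAt x (f (x t)) t)
    (hx0 : x 0 ∈ interior C) : ∀ t ≥ (0 : ℝ), x t ∈ C := by
  by_contra h
  push_neg at h
  set S : Set ℝ := {t | 0 ≤ t ∧ x t ∉ C} with hS
  have hSne : S.Nonempty := by obtain ⟨t, ht, ht'⟩ := h; exact ⟨t, ht, ht'⟩
  have hSbdd : BddBelow S := ⟨0, fun t ht => ht.1⟩
  set t₀ := sInf S with ht₀def
  have ht₀0 : 0 ≤ t₀ := le_csInf hSne fun t ht => ht.1
  have hcont : ∀ t ≥ (0:ℝ), ContinuousAt x t := fun t ht => (hx t ht).continuousAt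
  have hbefore : ∀ t, 0 ≤ t → t < t₀ → x t ∈ C := by
    intro t ht htlt
    by_contra hc
    exact absurd (csInf_le hSbdd ⟨ht, hc⟩) (not_le.mpr htlt)
  have ht₀pos : 0 < t₀ := by
    have hpre := (hcont 0 le_rfl).preimage_mem_nhds (mem_interior_iff_mem_nhds.mp hx0)
    obtain ⟨η, hη, hball⟩ := Metric.mem_nhds_iff.mp hpre
    have : η ≤ t₀ := by
      apply le_csInf hSne
      intro t ht
      by_contra hc
      push_neg at hc
      exact ht.2 (hball (mem_ball.mpr (by rw [Real.dist_eq, sub_zero, abs_of_nonneg ht.1]; exact hc)))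
    linarith
  have hxt₀C : x t₀ ∈ C := by
    have htend : Tendsto x (𝓝[<] t₀) (𝓝 (x t₀)) :=
      ((hcont t₀ ht₀0).tendsto).mono_left nhdsWithin_le_nhds
    refine hCc.mem_of_tendsto htend ?_
    filter_upwards [Ioo_mem_nhdsLT_of_mem
      ⟨(by positivity : (0:ℝ) < t₀/2) |>.trans_le (by linarith) , le_rfl⟩] with t ht
    exact hbefore t (by linarith [ht.1, half_pos ht₀pos] : (0:ℝ) ≤ t) ht.2
  have hafter : ∀ᶠ t in 𝓝[>] t₀, x t ∈ C := by
    by_cases hint : x t₀ ∈ interior C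
    · have hpre := (hcont t₀ ht₀0).preimage_mem_nhds (mem_interior_iff_mem_nhds.mp hint)
      exact Eventually.filter_mono nhdsWithin_le_nhds hpre
    · have hfr : x t₀ ∈ frontier C := ⟨subset_closure hxt₀C, hint⟩
      have hgrad : HasGradientAt g (gradient g (x t₀)) (x t₀) :=
        ((hg.differentiable (by simp)) (x t₀)).hasGradientAt
      have hderiv : HasDerivAt (fun t => g (x t))
          (inner ℝ (gradient g (x t₀)) (f (x t₀)) : ℝ) t₀ := by
        have hcomp := hgrad.hasFDerivAt.comp_hasDerivAt t₀ (hx t₀ ht₀0)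
        exact hcomp
      have hneg : (inner ℝ (gradient g (x t₀)) (f (x t₀)) : ℝ) < 0 := hin _ hfr
      have hslope := hasDerivAt_iff_tendsto_slope.mp hderiv
      have hsl : ∀ᶠ t in 𝓝[≠] t₀, slope (fun t => g (x t)) t₀ t < 0 :=
        hslope.eventually (Filter.Tendsto.eventually_lt_const hneg tendsto_id)
      have hsl' : ∀ᶠ t in 𝓝[>] t₀, slope (fun t => g (x t)) t₀ t < 0 :=
        hsl.filter_mono (nhdsWithin_mono _ fun t ht => ne_of_gt ht)
      filter_upwards [hsl', self_mem_nhdsWithin] with t hslt (htgt : t₀ < t)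
      rw [hKg]
      have hgt₀ : g (x t₀) = 0 := by rw [hfrg] at hfr; exact hfr
      rw [slope_def_field, hgt₀, sub_zero] at hslt
      have hd : (0:ℝ) < t - t₀ := sub_pos.mpr htgt
      have : g (x t) < 0 := by
        rcases div_neg_iff.mp hslt with ⟨_, h2⟩ | ⟨h1, _⟩
        · linarith
        · exact h1
      exact this.le
  obtain ⟨u, hu, hIoo⟩ := mem_nhdsGT_iff_exists_Ioo_subset.mp hafter
  have : u ≤ t₀ := by
    apply le_csInf hSne
    intro s hs
    by_contra hc
    push_neg at hc
    rcases lt_trichotomy s t₀ with h1 | h1 | h1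
    · exact hs.2 (hbefore s hs.1 h1)
    · exact hs.2 (h1 ▸ hxt₀C)
    · exact hs.2 (hIoo ⟨h1, hc⟩)
  exact absurd hu (not_lt.mpr this)


/-- If a continuous vector field `f` with `f 0 = 0` admits a nested sequence of
compact sets `K i ⊆ G` with `0` in their interiors and `⋂ i, K i = {0}`, whose boundaries are
smooth hypersurfaces (regular zero levels of smooth `g i` with `K i = {g i ≤ 0}`) on which the
field points strictly inward (`⟨N x, f x⟩ > 0` for the inward unit normal `N = -∇gᵢ/‖∇gᵢ‖`,
i.e. `⟪∇gᵢ x, f x⟫ < 0`), then the equilibrium `0` is Lyapunov stable. -/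
theorem stmt_4 {n : ℕ} (G : Set (EuclideanSpace ℝ (Fin n))) (hG : IsOpen G)
    (h0G : (0 : EuclideanSpace ℝ (Fin n)) ∈ G)
    (f : EuclideanSpace ℝ (Fin n) → EuclideanSpace ℝ (Fin n))
    (hf : ContinuousOn f G) (hf0 : f 0 = 0)
    (K : ℕ → Set (EuclideanSpace ℝ (Fin n)))
    (hKG : ∀ i, K i ⊆ G) (hKc : ∀ i, IsCompact (K i))
    (h0K : ∀ i, (0 : EuclideanSpace ℝ (Fin n)) ∈ interior (K i))
    (hnest : ∀ i j, i ≤ j → K j ⊆ K i)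
    (hinter : ⋂ i, K i = {(0 : EuclideanSpace ℝ (Fin n))})
    (g : ℕ → EuclideanSpace ℝ (Fin n) → ℝ) (hg : ∀ i, ContDiff ℝ (⊤ : ℕ∞) (g i))
    (hKg : ∀ i, K i = {x | g i x ≤ 0})
    (hfr : ∀ i, frontier (K i) = {x | g i x = 0})
    (h0fr : ∀ i, (0 : EuclideanSpace ℝ (Fin n)) ∉ frontier (K i))
    (hreg : ∀ i, ∀ x ∈ frontier (K i), gradient (g i) x ≠ 0)
    (hin : ∀ i, ∀ x ∈ frontier (K i),
      inner ℝ (gradient (g i) x) (f x) < (0 : ℝ)) :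
    LyapunovStable f := by
  intro ε hε
  obtain ⟨i, hi⟩ := shrink_aux K hKc hnest hinter hε
  obtain ⟨δ, hδ, hball⟩ := Metric.mem_nhds_iff.mp
    ((isOpen_interior.mem_nhds (h0K i)))
  refine ⟨δ, hδ, fun x hx hx0 t ht => ?_⟩
  have hx0' : x 0 ∈ interior (K i) := hball (mem_ball_zero_iff.mpr hx0)
  have := invariance_aux f (K i) (hKc i).isClosed (g i) (hg i) (hKg i) (hfr i)
    (hin i) x hx hx0' t ht
  exact mem_ball_zero_iff.mp (hi this)
end

section
/- Let f : G → ℝⁿ be a continuous vector field with f(0) = 0, and let F : V → ℝ be a differentiable function on a neighborhood V ⊆ G of 0 that is positive definite (F(0)=0, F(x)>0 for x≠0 near 0). Suppose there is a sequence of regular values aᵢ ↓ 0 such that on each hypersurface Hᵢ = boundary of the component of F⁻¹([0,aᵢ]) containing 0, the derivative of F along trajectories satisfies ⟨∇F(x), f(x)⟩ < 0 for all x ∈ Hᵢ. Then the equilibrium 0 is Lyapunov stable. -/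
open Metric Set

/-!
Given `ε`, pick `r < ε` with `closedBall 0 r ⊆ V`. Since `F` is positive on the compact sphere of
radius `r`, it is bounded below there by some `m > 0`; choose `a i < m`. The component `K` of
`{F ∈ [0, a i]}` containing `0` then cannot meet that sphere, so it lies in the ball, is closed,
and its frontier `H i` lies in the level set `{F = a i}`. A solution starting near `0` starts in
the interior of `K`; if it ever left `K`, at the first exit time `T` the function `F ∘ x` would
be maximal on `[0, T]` at `T`, forcing `⟪∇F (x T), f (x T)⟫ ≥ 0` and contradicting the hypothesis
on `H i`.
-/

open Filter Topology

theorem IsPreconnected.subset_ball_of_disjoint_sphere {X : Type*} [PseudoMetricSpace X]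
    {K : Set X} {p : X} {r : ℝ} (hK : IsPreconnected K) (hpK : p ∈ K) (hr : 0 < r)
    (hKr : Disjoint K (sphere p r)) : K ⊆ ball p r := by
  refine hK.subset_left_of_subset_union isOpen_ball isClosed_closedBall.isOpen_compl
    (disjoint_compl_right.mono_left ball_subset_closedBall) (fun y hy => ?_)
    ⟨p, hpK, mem_ball_self hr⟩
  have hy_sphere : dist y p ≠ r := fun h => hKr.notMem_of_mem_left hy h
  rcases hy_sphere.lt_or_gt with h | h
  · exact Or.inl h
  · exact Or.inr (not_le.2 h)

theorem isClosed_connectedComponentIn_of_subset {X : Type*} [TopologicalSpace X]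
    {S C : Set X} {p : X} (hC : IsClosed C) (hCS : C ⊆ S) (hKC : connectedComponentIn S p ⊆ C) :
    IsClosed (connectedComponentIn S p) := by
  by_cases hp : p ∈ S
  · refine isClosed_of_closure_subset ?_
    exact isPreconnected_connectedComponentIn.closure.subset_connectedComponentIn
      (subset_closure (mem_connectedComponentIn hp)) ((closure_minimal hKC hC).trans hCS)
  · rw [connectedComponentIn_eq_empty hp]
    exact isClosed_empty

theorem connectedComponentIn_inter_subset_interior {X : Type*} [TopologicalSpace X]
    [LocallyConnectedSpace X] {S U : Set X} {p : X} (hU : IsOpen U) (hUS : U ⊆ S) :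
    connectedComponentIn S p ∩ U ⊆ interior (connectedComponentIn S p) := by
  rintro y ⟨hyK, hyU⟩
  rw [connectedComponentIn_eq hyK]
  exact interior_maximal (connectedComponentIn_mono y hUS) hU.connectedComponentIn
    (mem_connectedComponentIn hyU)

theorem HasDerivAt.nonneg_of_eventually_le_left {g : ℝ → ℝ} {g' T : ℝ}
    (hg : HasDerivAt g g' T) (hle : ∀ᶠ s in 𝓝[<] T, g s ≤ g T) : 0 ≤ g' := by
  have hslope : Tendsto (slope g T) (𝓝[<] T) (𝓝 g') :=
    (hasDerivAt_iff_tendsto_slope_left_right.1 hg).1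
  refine ge_of_tendsto hslope ?_
  filter_upwards [hle, self_mem_nhdsWithin] with s hs hsT
  rw [slope_def_field]
  exact div_nonneg_of_nonpos (sub_nonpos.2 hs) (sub_nonpos.2 (le_of_lt hsT))

theorem HasGradientAt.hasDerivAt_comp {E : Type*} [NormedAddCommGroup E]
    [InnerProductSpace ℝ E] [CompleteSpace E] {F : E → ℝ} {x : ℝ → E} {g v : E} {t : ℝ}
    (hF : HasGradientAt F g (x t)) (hx : HasDerivAt x v t) :
    HasDerivAt (F ∘ x) (inner ℝ g v) t := by
  simpa using (hasGradientAt_iff_hasFDerivAt.1 hF).comp_hasDerivAt t hx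

theorem exists_first_exit_frontier {X : Type*} [TopologicalSpace X] {K : Set X} {x : ℝ → X}
    (hK : IsClosed K) (hx : ContinuousOn x (Ici 0)) (hx0 : x 0 ∈ interior K)
    (hexit : ∃ t ≥ 0, x t ∉ K) :
    ∃ T > 0, x T ∈ frontier K ∧ ∀ s ∈ Ico 0 T, x s ∈ K := by
  set E : Set ℝ := Ici 0 ∩ x ⁻¹' (interior K)ᶜ
  have hE : IsClosed E :=
    hx.preimage_isClosed_of_isClosed isClosed_Ici isOpen_interior.isClosed_compl
  obtain ⟨t, ht, hxt⟩ := hexit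
  have hEne : E.Nonempty := ⟨t, ht, fun h => hxt (interior_subset h)⟩
  have hEbdd : BddBelow E := ⟨0, fun s hs => hs.1⟩
  set T := sInf E
  obtain ⟨hT0, hxT⟩ : T ∈ E := hE.csInf_mem hEne hEbdd
  have hbefore : ∀ s ∈ Ico 0 T, x s ∈ interior K := fun s hs => by
    by_contra h
    exact (csInf_le hEbdd ⟨hs.1, h⟩).not_gt hs.2
  have hTpos : 0 < T := hT0.lt_of_ne fun h => hxT (h ▸ hx0)
  have hxTK : x T ∈ K := by
    have hT : T ∈ closure (Ico 0 T) := by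
      rw [closure_Ico hTpos.ne]
      exact right_mem_Icc.2 hT0
    refine closure_minimal ?_ hK (((hx T hT0).mono Ico_subset_Ici_self).mem_closure_image hT)
    rintro _ ⟨s, hs, rfl⟩
    exact interior_subset (hbefore s hs)
  exact ⟨T, hTpos, ⟨subset_closure hxTK, hxT⟩, fun s hs => interior_subset (hbefore s hs)⟩

section SublevelComponent

variable {X : Type*} {V : Set X} {F : X → ℝ} {c : ℝ} {p : X}

theorem connectedComponentIn_sublevel_subset_ball [PseudoMetricSpace X] {r : ℝ} (hr : 0 < r)
    (hp : p ∈ {z ∈ V | F z ∈ Icc 0 c}) (hsphere : ∀ y ∈ sphere p r, c < F y) :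
    connectedComponentIn {z ∈ V | F z ∈ Icc 0 c} p ⊆ ball p r :=
  isPreconnected_connectedComponentIn.subset_ball_of_disjoint_sphere
    (mem_connectedComponentIn hp) hr <| disjoint_left.2 fun y hyK hys =>
      (hsphere y hys).not_ge (connectedComponentIn_subset _ _ hyK).2.2

theorem isClosed_connectedComponentIn_sublevel [PseudoMetricSpace X] {r : ℝ}
    (hrV : closedBall p r ⊆ V) (hF : ContinuousOn F (closedBall p r))
    (hK : connectedComponentIn {z ∈ V | F z ∈ Icc 0 c} p ⊆ closedBall p r) :
    IsClosed (connectedComponentIn {z ∈ V | F z ∈ Icc 0 c} p) :=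
  isClosed_connectedComponentIn_of_subset
    (hF.preimage_isClosed_of_isClosed isClosed_closedBall isClosed_Icc)
    (fun _ hy => ⟨hrV hy.1, hy.2⟩) fun _ hy => ⟨hK hy, (connectedComponentIn_subset _ _ hy).2⟩

theorem mem_interior_connectedComponentIn_sublevel [TopologicalSpace X]
    [LocallyConnectedSpace X] {y : X} (hV : IsOpen V) (hF : ContinuousOn F V)
    (hFnn : ∀ z ∈ V, 0 ≤ F z) (hyK : y ∈ connectedComponentIn {z ∈ V | F z ∈ Icc 0 c} p)
    (hyV : y ∈ V) (hyc : F y < c) :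
    y ∈ interior (connectedComponentIn {z ∈ V | F z ∈ Icc 0 c} p) := by
  refine connectedComponentIn_inter_subset_interior (hF.isOpen_inter_preimage hV isOpen_Iio)
    ?_ ⟨hyK, hyV, hyc⟩
  exact fun z hz => ⟨hz.1, hFnn z hz.1, le_of_lt hz.2⟩

theorem frontier_connectedComponentIn_sublevel_subset [TopologicalSpace X]
    [LocallyConnectedSpace X] (hV : IsOpen V) (hF : ContinuousOn F V) (hFnn : ∀ z ∈ V, 0 ≤ F z)
    (hK : IsClosed (connectedComponentIn {z ∈ V | F z ∈ Icc 0 c} p)) :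
    frontier (connectedComponentIn {z ∈ V | F z ∈ Icc 0 c} p) ⊆ {z ∈ V | F z = c} := by
  rw [hK.frontier_eq]
  rintro y ⟨hyK, hyint⟩
  obtain ⟨hyV, -, hyc⟩ := connectedComponentIn_subset _ _ hyK
  exact ⟨hyV, hyc.antisymm (not_lt.1 fun hlt =>
    hyint (mem_interior_connectedComponentIn_sublevel hV hF hFnn hyK hyV hlt))⟩

end SublevelComponent

theorem mem_of_inner_gradient_neg_on_frontier {E : Type*} [NormedAddCommGroup E]
    [InnerProductSpace ℝ E] [CompleteSpace E] {K : Set E} {F : E → ℝ} {f : E → E} {c : ℝ}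
    {x : ℝ → E} (hK : IsClosed K) (hFK : ∀ y ∈ K, F y ≤ c)
    (hfr : ∀ y ∈ frontier K, F y = c ∧ DifferentiableAt ℝ F y ∧ inner ℝ (gradient F y) (f y) < 0)
    (hx : ∀ t ≥ 0, HasDerivAt x (f (x t)) t) (hx0 : x 0 ∈ interior K) :
    ∀ t ≥ 0, x t ∈ K := by
  by_contra! hexit
  obtain ⟨T, hT, hxT, hbefore⟩ := exists_first_exit_frontier hK
    (fun t ht => (hx t ht).continuousAt.continuousWithinAt) hx0 hexit
  obtain ⟨hFT, hFd, hneg⟩ := hfr _ hxT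
  have hmax : ∀ᶠ s in 𝓝[<] T, (F ∘ x) s ≤ (F ∘ x) T := by
    filter_upwards [Ioo_mem_nhdsLT hT] with s hs
    simpa [hFT] using hFK _ (hbefore s ⟨hs.1.le, hs.2⟩)
  have hnonneg :=
    (hFd.hasGradientAt.hasDerivAt_comp (hx T hT.le)).nonneg_of_eventually_le_left hmax
  linarith

theorem stmt_5_general {n : ℕ} (V : Set (EuclideanSpace ℝ (Fin n))) (hV : IsOpen V)
    (h0V : (0 : EuclideanSpace ℝ (Fin n)) ∈ V)
    (f : EuclideanSpace ℝ (Fin n) → EuclideanSpace ℝ (Fin n))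
    (F : EuclideanSpace ℝ (Fin n) → ℝ) (hF : DifferentiableOn ℝ F V) (hF0 : F 0 = 0)
    (hFpos : ∀ x ∈ V, x ≠ 0 → 0 < F x)
    (a : ℕ → ℝ) (hapos : ∀ i, 0 < a i)
    (halim : Filter.Tendsto a Filter.atTop (nhds 0))
    (H : ℕ → Set (EuclideanSpace ℝ (Fin n)))
    (hH : ∀ i, H i = frontier (connectedComponentIn {x ∈ V | F x ∈ Icc 0 (a i)} 0))
    (hin : ∀ i, ∀ x ∈ H i, inner ℝ (gradient F x) (f x) < (0 : ℝ)) :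
    LyapunovStable f := by
  intro ε hε
  have hFc : ContinuousOn F V := hF.continuousOn
  have hFnn : ∀ x ∈ V, 0 ≤ F x := fun x hx =>
    (eq_or_ne x 0).elim (fun h => (h ▸ hF0).ge) fun h => (hFpos x hx h).le
  obtain ⟨r₀, hr₀, hr₀V⟩ := nhds_basis_closedBall.mem_iff.1 (hV.mem_nhds h0V)
  obtain ⟨r, hr, hrε, hrV⟩ : ∃ r > 0, r < ε ∧ closedBall (0 : EuclideanSpace ℝ (Fin n)) r ⊆ V :=
    ⟨min r₀ (ε / 2), lt_min hr₀ (half_pos hε), (min_le_right _ _).trans_lt (half_lt_self hε),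
      (closedBall_subset_closedBall (min_le_left _ _)).trans hr₀V⟩
  have hsV : sphere (0 : EuclideanSpace ℝ (Fin n)) r ⊆ V := sphere_subset_closedBall.trans hrV
  obtain ⟨m, hm, hmF⟩ := (isCompact_sphere 0 r).exists_forall_le' (hFc.mono hsV)
    fun y hy => hFpos y (hsV hy) (ne_zero_of_mem_sphere hr.ne' ⟨y, hy⟩)
  obtain ⟨i, hi⟩ := (halim.eventually_lt_const hm).exists
  have h0S : (0 : EuclideanSpace ℝ (Fin n)) ∈ {x ∈ V | F x ∈ Icc 0 (a i)} :=
    ⟨h0V, by simp [hF0, (hapos i).le]⟩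
  have hKball :=
    connectedComponentIn_sublevel_subset_ball hr h0S fun y hy => hi.trans_le (hmF y hy)
  have hKclosed := isClosed_connectedComponentIn_sublevel hrV (hFc.mono hrV)
    (hKball.trans ball_subset_closedBall)
  obtain ⟨δ, hδ, hδK⟩ := isOpen_iff.1 isOpen_interior 0 <|
    mem_interior_connectedComponentIn_sublevel hV hFc hFnn (mem_connectedComponentIn h0S) h0V
      (hF0 ▸ hapos i)
  refine ⟨δ, hδ, fun x hx hx0 t ht => (mem_ball_zero_iff.1 (hKball ?_)).trans hrε⟩
  refine mem_of_inner_gradient_neg_on_frontier hKclosed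
    (fun y hy => (connectedComponentIn_subset _ _ hy).2.2) (fun y hy => ?_) hx
    (hδK (mem_ball_zero_iff.2 hx0)) t ht
  obtain ⟨hyV, hyc⟩ := frontier_connectedComponentIn_sublevel_subset hV hFc hFnn hKclosed hy
  exact ⟨hyc, hF.differentiableAt (hV.mem_nhds hyV), hin i y (hH i ▸ hy)⟩

/-- Let `f` be continuous with `f 0 = 0` and `F` a differentiable positive definite
function on a neighborhood `V` of `0`. If there is a strictly decreasing sequence of regular
values `a i → 0`, `a i > 0`, such that on each hypersurface
`H i = frontier` of the connected component of `F⁻¹([0, a i])` containing `0`, the orbital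
derivative satisfies `⟪∇F x, f x⟫ < 0`, then the equilibrium `0` is Lyapunov stable. -/
theorem stmt_5 {n : ℕ} (V : Set (EuclideanSpace ℝ (Fin n))) (hV : IsOpen V)
    (h0V : (0 : EuclideanSpace ℝ (Fin n)) ∈ V)
    (f : EuclideanSpace ℝ (Fin n) → EuclideanSpace ℝ (Fin n))
    (hf : Continuous f) (hf0 : f 0 = 0)
    (F : EuclideanSpace ℝ (Fin n) → ℝ) (hF : DifferentiableOn ℝ F V) (hF0 : F 0 = 0)
    (hFpos : ∀ x ∈ V, x ≠ 0 → 0 < F x)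
    (a : ℕ → ℝ) (haanti : StrictAnti a) (hapos : ∀ i, 0 < a i)
    (halim : Filter.Tendsto a Filter.atTop (nhds 0))
    (hreg : ∀ i, ∀ x ∈ V, F x = a i → gradient F x ≠ 0)
    (H : ℕ → Set (EuclideanSpace ℝ (Fin n)))
    (hH : ∀ i, H i = frontier (connectedComponentIn {x ∈ V | F x ∈ Icc 0 (a i)} 0))
    (hin : ∀ i, ∀ x ∈ H i, inner ℝ (gradient F x) (f x) < (0 : ℝ)) :
    LyapunovStable f :=
  stmt_5_general V hV h0V f F hF hF0 hFpos a hapos halim H hH hin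
end
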